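/- arXiv:1506.00249 — 8 statements merged into one kernel-verified Lean document; each statement's English description precedes it below -/
import Mathlib

section
/- If A is an independent set of a finite simple graph G and Λ is a nonempty collection of maximum independent sets of G, then there exists a matching in G from A minus the intersection of Λ into the union of Λ minus A. -/
open Set

variable {V : Type*}

/-- `S` is an independent set of `G`. -/
def IndepSet (G : SimpleGraph V) (S : Set V) : Prop :=
  ∀ x ∈ S, ∀ y ∈ S, ¬ G.Adj x y

/-- The independence number `α(G)`. -/
noncomputable def alpha (G : SimpleGraph V) : ℕ :=
  sSup {n | ∃ S : Set V, IndepSet G S ∧ S.ncard = n}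

/-- `S` is a maximum independent set of `G`. -/
def MaxIndep (G : SimpleGraph V) (S : Set V) : Prop :=
  IndepSet G S ∧ S.ncard = alpha G

/-- `Ω(G)`, the family of all maximum independent sets. -/
def Omega (G : SimpleGraph V) : Set (Set V) := {S | MaxIndep G S}

/-- `core(G)`, the intersection of all maximum independent sets. -/
def core (G : SimpleGraph V) : Set V := ⋂₀ Omega G

/-- `corona(G)`, the union of all maximum independent sets. -/
def corona (G : SimpleGraph V) : Set V := ⋃₀ Omega G

/-- The matching number `μ(G)`. -/
noncomputable def matchNum (G : SimpleGraph V) : ℕ :=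
  sSup {n | ∃ M : G.Subgraph, M.IsMatching ∧ M.edgeSet.ncard = n}

/-- A matching from `X` into `Y`: an injection `f` on `X` into `Y` such that each `x ∈ X`
is adjacent to `f x` and the edges `{x, f x}` are pairwise disjoint. -/
def MatchingFrom (G : SimpleGraph V) (X Y : Set V) : Prop :=
  ∃ f : V → V, Set.InjOn f X ∧ (∀ x ∈ X, f x ∈ Y ∧ G.Adj x (f x)) ∧
    ∀ x ∈ X, ∀ y ∈ X, x ≠ y → f x ≠ y

lemma alpha_bddAbove [Fintype V] (G : SimpleGraph V) :
    BddAbove {n | ∃ S : Set V, IndepSet G S ∧ S.ncard = n} := by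
  refine ⟨Fintype.card V, ?_⟩
  rintro n ⟨S, -, rfl⟩
  simpa [Set.ncard_univ] using Set.ncard_le_ncard (Set.subset_univ S) Set.finite_univ

lemma swap_lemma [Fintype V] (G : SimpleGraph V) {S X' : Set V}
    (hS : MaxIndep G S) (hX' : IndepSet G X') (hdis : Disjoint X' S) :
    X'.ncard ≤ (S ∩ {v | ∃ x ∈ X', G.Adj x v}).ncard := by
  classical
  set NX := {v | ∃ x ∈ X', G.Adj x v} with hNX
  have hindep : IndepSet G ((S \ NX) ∪ X') := by
    rintro x hx y hy hadj
    rcases hx with hx | hx <;> rcases hy with hy | hy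
    · exact hS.1 x hx.1 y hy.1 hadj
    · exact hx.2 ⟨y, hy, hadj.symm⟩
    · exact hy.2 ⟨x, hx, hadj⟩
    · exact hX' x hx y hy hadj
  have h1 : ((S \ NX) ∪ X').ncard ≤ alpha G :=
    le_csSup (alpha_bddAbove G) ⟨_, hindep, rfl⟩
  have hdisj : Disjoint (S \ NX) X' := (hdis.symm.mono_left Set.diff_subset)
  have h2 : ((S \ NX) ∪ X').ncard = (S \ NX).ncard + X'.ncard :=
    Set.ncard_union_eq hdisj
  have h3 : (S \ NX).ncard = S.ncard - (S ∩ NX).ncard := by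
    rw [← Set.diff_self_inter, Set.ncard_diff Set.inter_subset_left]
  have h4 : (S ∩ NX).ncard ≤ S.ncard := Set.ncard_le_ncard Set.inter_subset_left
  have h5 := hS.2
  omega

lemma family_hall [Fintype V] (G : SimpleGraph V) {X : Set V} (hX : IndepSet G X)
    {Λ : Set (Set V)} (hΛ : Λ ⊆ Omega G) (Γ : Finset (Set V)) :
    ↑Γ ⊆ Λ → (X \ ⋂₀ ↑Γ).ncard ≤ ({v | ∃ x ∈ X, G.Adj x v} ∩ ⋃₀ ↑Γ).ncard := by
  classical
  induction Γ using Finset.induction_on with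
  | empty => intro _; simp
  | @insert S Γ hSΓ ih =>
    intro hsub
    have hSΛ : S ∈ Λ := hsub (by simp)
    have hΓΛ : ↑Γ ⊆ Λ := fun T hT => hsub (by simp [hT])
    set N := {v | ∃ x ∈ X, G.Adj x v} with hN
    set X' := (X ∩ ⋂₀ ↑Γ) \ S with hX'
    have hX'indep : IndepSet G X' := fun x hx y hy => hX x hx.1.1 y hy.1.1
    have hswap := swap_lemma G (hΛ hSΛ) hX'indep Set.disjoint_sdiff_left
    have hsub2 : S ∩ {v | ∃ x ∈ X', G.Adj x v} ⊆
        ({v | ∃ x ∈ X, G.Adj x v} ∩ ⋃₀ ↑(insert S Γ)) \ ⋃₀ (↑Γ : Set (Set V)) := by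
      rintro v ⟨hvS, x, hx, hadj⟩
      refine ⟨⟨⟨x, hx.1.1, hadj⟩, ⟨S, by simp, hvS⟩⟩, ?_⟩
      rintro ⟨T, hT, hvT⟩
      exact (hΛ (hΓΛ hT)).1 x (hx.1.2 T hT) v hvT hadj
    have hXdecomp : X \ ⋂₀ ↑(insert S Γ) = (X \ ⋂₀ ↑Γ) ∪ X' := by
      ext v
      simp only [Finset.coe_insert, Set.sInter_insert, Set.mem_diff, Set.mem_inter_iff,
        Set.mem_union, hX', Set.mem_diff, Set.mem_inter_iff]
      tauto
    have hd1 : Disjoint (X \ ⋂₀ ↑Γ) X' := by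
      rw [Set.disjoint_left]
      rintro v hv1 hv2
      exact hv1.2 hv2.1.2
    have hd2 : Disjoint (N ∩ ⋃₀ ↑Γ) (S ∩ {v | ∃ x ∈ X', G.Adj x v}) := by
      rw [Set.disjoint_left]
      rintro v hv1 hv2
      exact (hsub2 hv2).2 hv1.2
    have hsub3 : (N ∩ ⋃₀ ↑Γ) ∪ (S ∩ {v | ∃ x ∈ X', G.Adj x v}) ⊆ N ∩ ⋃₀ ↑(insert S Γ) := by
      rintro v (hv | hv)
      · exact ⟨hv.1, Set.sUnion_mono (by simp) hv.2⟩
      · exact (hsub2 hv).1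
    calc (X \ ⋂₀ ↑(insert S Γ)).ncard
        = (X \ ⋂₀ ↑Γ).ncard + X'.ncard := by rw [hXdecomp, Set.ncard_union_eq hd1]
      _ ≤ (N ∩ ⋃₀ ↑Γ).ncard + (S ∩ {v | ∃ x ∈ X', G.Adj x v}).ncard :=
          add_le_add (ih hΓΛ) hswap
      _ = ((N ∩ ⋃₀ ↑Γ) ∪ (S ∩ {v | ∃ x ∈ X', G.Adj x v})).ncard :=
          (Set.ncard_union_eq hd2).symm
      _ ≤ (N ∩ ⋃₀ ↑(insert S Γ)).ncard := Set.ncard_le_ncard hsub3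

theorem stmt_0 [Fintype V] (G : SimpleGraph V) (A : Set V) (hA : IndepSet G A)
    (Λ : Set (Set V)) (hΛ : Λ ⊆ Omega G) (hne : Λ.Nonempty) :
    MatchingFrom G (A \ ⋂₀ Λ) (⋃₀ Λ \ A) := by
  classical
  haveI : Fintype ↥(A \ ⋂₀ Λ) := Fintype.ofFinite _
  let t : ↥(A \ ⋂₀ Λ) → Finset V :=
    fun x => (Set.toFinite {v | v ∈ ⋃₀ Λ \ A ∧ G.Adj ↑x v}).toFinset
  have hΛfin : Λ.Finite := Set.toFinite Λ
  have hall : ∀ s : Finset ↥(A \ ⋂₀ Λ), s.card ≤ (s.biUnion t).card := by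
    intro s
    set Xf : Finset V := s.image Subtype.val with hXf
    set X : Set V := ↑Xf with hXdef
    have hXsub : X ⊆ A \ ⋂₀ Λ := by
      rintro v hv
      simp only [hXdef, hXf, Finset.coe_image, Set.mem_image] at hv
      obtain ⟨i, -, rfl⟩ := hv
      exact i.2
    have hXindep : IndepSet G X := fun x hx y hy =>
      hA x (hXsub hx).1 y (hXsub hy).1
    have key := family_hall G hXindep hΛ hΛfin.toFinset
      (by rw [Set.Finite.coe_toFinset])
    rw [Set.Finite.coe_toFinset] at key
    have hXeq : X \ ⋂₀ Λ = X := by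
      apply Set.Subset.antisymm Set.diff_subset
      exact fun v hv => ⟨hv, fun hc => (hXsub hv).2 hc⟩
    rw [hXeq] at key
    have hsub : {v | ∃ x ∈ X, G.Adj x v} ∩ ⋃₀ Λ ⊆ ↑(s.biUnion t) := by
      rintro v ⟨⟨x, hx, hadj⟩, hvU⟩
      simp only [hXdef, hXf, Finset.coe_image, Set.mem_image, Finset.mem_coe] at hx
      obtain ⟨i, hi, rfl⟩ := hx
      simp only [Finset.coe_biUnion, Set.mem_iUnion, Finset.mem_coe]
      refine ⟨i, hi, ?_⟩
      rw [Set.Finite.mem_toFinset]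
      exact ⟨⟨hvU, fun hvA => hA _ i.2.1 v hvA hadj⟩, hadj⟩
    have hcard1 : s.card = X.ncard := by
      rw [hXdef, Set.ncard_coe_finset, hXf,
        Finset.card_image_of_injective s Subtype.val_injective]
    have hcard2 : ({v | ∃ x ∈ X, G.Adj x v} ∩ ⋃₀ Λ).ncard ≤ (s.biUnion t).card := by
      rw [← Set.ncard_coe_finset]
      exact Set.ncard_le_ncard hsub
    omega
  obtain ⟨f, hfinj, hft⟩ := (Finset.all_card_le_biUnion_card_iff_existsInjective' t).mp hall
  have hmem : ∀ x : ↥(A \ ⋂₀ Λ), f x ∈ ⋃₀ Λ \ A ∧ G.Adj ↑x (f x) := by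
    intro x
    have := hft x
    rw [Set.Finite.mem_toFinset] at this
    exact this
  refine ⟨fun v => if h : v ∈ A \ ⋂₀ Λ then f ⟨v, h⟩ else v, ?_, ?_, ?_⟩
  · intro a ha b hb h
    simp only [dif_pos ha, dif_pos hb] at h
    exact congrArg Subtype.val (hfinj h)
  · intro x hx
    simp only [dif_pos hx]
    exact ⟨(hmem ⟨x, hx⟩).1, (hmem ⟨x, hx⟩).2⟩
  · intro x hx y hy hne heq
    simp only [dif_pos hx] at heq
    exact (hmem ⟨x, hx⟩).1.2 (heq ▸ hy.1)
end

section
/- If Γ is a nonempty collection of maximum independent sets of G and Γ' is a nonempty collection of independent sets of G, then there is a matching from (⋂Γ') − (⋂Γ) into (⋃Γ) − (⋃Γ'). -/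
open Set

variable {V : Type*}

lemma indep_ncard_le [Fintype V] (G : SimpleGraph V) {S : Set V} (hS : IndepSet G S) :
    S.ncard ≤ alpha G := by
  apply le_csSup
  · refine ⟨Fintype.card V, ?_⟩
    rintro n ⟨T, _, rfl⟩
    simpa [Set.ncard_univ, Nat.card_eq_fintype_card] using
      Set.ncard_le_ncard (Set.subset_univ T) (Set.toFinite _)
  · exact ⟨S, hS, rfl⟩

lemma key_base [Fintype V] {G : SimpleGraph V} {W X : Set V} (hW : MaxIndep G W)
    (hX : IndepSet G X) (hdisj : ∀ x ∈ X, x ∉ W) :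
    X.ncard ≤ (W ∩ {v | ∃ x ∈ X, G.Adj x v}).ncard := by
  by_contra h
  push_neg at h
  set N : Set V := {v | ∃ x ∈ X, G.Adj x v} with hN
  have hindep : IndepSet G ((W \ N) ∪ X) := by
    rintro a (⟨haW, haN⟩ | haX) b (⟨hbW, hbN⟩ | hbX) hab
    · exact hW.1 a haW b hbW hab
    · exact haN ⟨b, hbX, hab.symm⟩
    · exact hbN ⟨a, haX, hab⟩
    · exact hX a haX b hbX hab
  have hdW : W \ N = W \ (W ∩ N) := (Set.diff_self_inter).symm
  have hcard : ((W \ N) ∪ X).ncard = W.ncard - (W ∩ N).ncard + X.ncard := by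
    rw [Set.ncard_union_eq (Set.disjoint_left.mpr fun {a} haWN haX => hdisj a haX haWN.1)
      (Set.toFinite _) (Set.toFinite _), hdW, Set.ncard_diff Set.inter_subset_left]
  have hle := indep_ncard_le G hindep
  have hWle : (W ∩ N).ncard ≤ W.ncard :=
    Set.ncard_le_ncard Set.inter_subset_left (Set.toFinite _)
  have hWα : W.ncard = alpha G := hW.2
  omega

lemma key_ind [Fintype V] {G : SimpleGraph V} (Γ : Finset (Set V))
    (hΓ : ∀ W ∈ Γ, MaxIndep G W) :
    ∀ X : Set V, IndepSet G X → (∀ x ∈ X, ∃ W ∈ Γ, x ∉ W) →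
      X.ncard ≤ ((⋃ W ∈ Γ, W) ∩ {v | ∃ x ∈ X, G.Adj x v}).ncard := by
  classical
  induction Γ using Finset.induction with
  | empty =>
    intro X hX hcov
    have hXe : X = ∅ := by
      ext x
      simp only [Set.mem_empty_iff_false, iff_false]
      intro hx
      obtain ⟨W, hW, -⟩ := hcov x hx
      simp at hW
    simp [hXe]
  | @insert W Γ₀ hWΓ₀ hIH =>
    intro X hX hcov
    have hWmax : MaxIndep G W := hΓ W (Finset.mem_insert_self _ _)
    set X₁ : Set V := X \ W with hX₁
    set X₂ : Set V := X ∩ W with hX₂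
    -- base part
    have h1 : X₁.ncard ≤ (W ∩ {v | ∃ x ∈ X₁, G.Adj x v}).ncard :=
      key_base hWmax (fun a ha b hb => hX a ha.1 b hb.1) (fun x hx => hx.2)
    -- inductive part
    have h2 : X₂.ncard ≤ ((⋃ W' ∈ Γ₀, W') ∩ {v | ∃ x ∈ X₂, G.Adj x v}).ncard := by
      refine hIH (fun W' hW' => hΓ W' (Finset.mem_insert_of_mem hW')) X₂
        (fun a ha b hb => hX a ha.1 b hb.1) ?_
      intro x hx
      obtain ⟨W', hW', hxW'⟩ := hcov x hx.1
      rcases Finset.mem_insert.mp hW' with rfl | hmem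
      · exact absurd hx.2 hxW'
      · exact ⟨W', hmem, hxW'⟩
    set T₁ : Set V := W ∩ {v | ∃ x ∈ X₁, G.Adj x v}
    set T₂ : Set V := (⋃ W' ∈ Γ₀, W') ∩ {v | ∃ x ∈ X₂, G.Adj x v}
    have hdisj : Disjoint T₁ T₂ := by
      refine Set.disjoint_left.mpr ?_
      rintro v ⟨hvW, -⟩ ⟨-, x, hx, hadj⟩
      exact hWmax.1 x hx.2 v hvW hadj
    have hsub : T₁ ∪ T₂ ⊆ (⋃ W' ∈ insert W Γ₀, W') ∩ {v | ∃ x ∈ X, G.Adj x v} := by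
      rintro v (⟨hvW, x, hx, hadj⟩ | ⟨hvU, x, hx, hadj⟩)
      · exact ⟨Set.mem_biUnion (Finset.mem_insert_self _ _) hvW, x, hx.1, hadj⟩
      · refine ⟨?_, x, hx.1, hadj⟩
        obtain ⟨W', hW', hvW'⟩ := Set.mem_iUnion₂.mp hvU
        exact Set.mem_biUnion (Finset.mem_insert_of_mem hW') hvW'
    have hXsplit : X₁ ∪ X₂ = X := by
      ext v; simp only [hX₁, hX₂, Set.mem_union, Set.mem_diff, Set.mem_inter_iff]; tauto
    have hXdisj : Disjoint X₁ X₂ := Set.disjoint_left.mpr fun {a} ha hb => ha.2 hb.2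
    calc X.ncard = X₁.ncard + X₂.ncard := by
          rw [← hXsplit, Set.ncard_union_eq hXdisj (Set.toFinite _) (Set.toFinite _)]
      _ ≤ T₁.ncard + T₂.ncard := Nat.add_le_add h1 h2
      _ = (T₁ ∪ T₂).ncard := (Set.ncard_union_eq hdisj (Set.toFinite _) (Set.toFinite _)).symm
      _ ≤ _ := Set.ncard_le_ncard hsub (Set.toFinite _)

theorem stmt_1 [Fintype V] (G : SimpleGraph V)
    (Γ Γ' : Set (Set V)) (hΓ : Γ ⊆ Omega G) (hΓne : Γ.Nonempty)
    (hΓ' : ∀ S ∈ Γ', IndepSet G S) (hΓ'ne : Γ'.Nonempty) :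
    MatchingFrom G (⋂₀ Γ' \ ⋂₀ Γ) (⋃₀ Γ \ ⋃₀ Γ') := by
  classical
  obtain ⟨S₀, hS₀⟩ := hΓ'ne
  set A : Set V := ⋂₀ Γ' \ ⋂₀ Γ with hA
  set B : Set V := ⋃₀ Γ \ ⋃₀ Γ' with hB
  have hAsub : A ⊆ S₀ := fun x hx => hx.1 S₀ hS₀
  set Γf : Finset (Set V) := (Set.toFinite Γ).toFinset with hΓf
  have hΓfm : ∀ W, W ∈ Γf ↔ W ∈ Γ := fun W => Set.Finite.mem_toFinset _
  set t : A → Finset V := fun x => G.neighborFinset x.1 ∩ (Set.toFinite B).toFinset with ht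
  have hall : ∀ s : Finset A, s.card ≤ (s.biUnion t).card := by
    intro s
    set sV : Finset V := s.image Subtype.val with hsV
    set X : Set V := ↑sV with hXdef
    have hXA : X ⊆ A := by
      intro x hx
      obtain ⟨⟨x', hx'⟩, -, rfl⟩ := Finset.mem_image.mp hx
      exact hx'
    have hXind : IndepSet G X := fun a ha b hb =>
      hΓ' S₀ hS₀ a (hAsub (hXA ha)) b (hAsub (hXA hb))
    have hcov : ∀ x ∈ X, ∃ W ∈ Γf, x ∉ W := by
      intro x hx
      have : x ∉ ⋂₀ Γ := (hXA hx).2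
      obtain ⟨W, hW, hxW⟩ := by simpa [Set.mem_sInter] using this
      exact ⟨W, (hΓfm W).mpr hW, hxW⟩
    have hkey := key_ind Γf (fun W hW => hΓ ((hΓfm W).mp hW)) X hXind hcov
    have hsub : (⋃ W ∈ Γf, W) ∩ {v | ∃ x ∈ X, G.Adj x v} ⊆ ↑(s.biUnion t) := by
      rintro v ⟨hvU, x, hx, hadj⟩
      obtain ⟨W, hW, hvW⟩ := Set.mem_iUnion₂.mp hvU
      have hvB : v ∈ B := by
        refine ⟨⟨W, (hΓfm W).mp hW, hvW⟩, ?_⟩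
        rintro ⟨S, hS, hvS⟩
        exact hΓ' S hS x ((hXA hx).1 S hS) v hvS hadj
      obtain ⟨x', hx's, hx'v⟩ := Finset.mem_image.mp hx
      refine Finset.mem_coe.mpr (Finset.mem_biUnion.mpr ⟨x', hx's, ?_⟩)
      rw [ht]
      refine Finset.mem_inter.mpr ⟨?_, (Set.Finite.mem_toFinset _).mpr hvB⟩
      rw [SimpleGraph.mem_neighborFinset, hx'v]
      exact hadj
    have h1 : s.card = X.ncard := by
      rw [hXdef, Set.ncard_coe_finset, hsV,
        Finset.card_image_of_injective _ Subtype.val_injective]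
    have h2 : ((⋃ W ∈ Γf, W) ∩ {v | ∃ x ∈ X, G.Adj x v}).ncard ≤ (s.biUnion t).card := by
      rw [← Set.ncard_coe_finset (s.biUnion t)]
      exact Set.ncard_le_ncard hsub (Set.toFinite _)
    omega
  obtain ⟨f, hfinj, hf⟩ := (Finset.all_card_le_biUnion_card_iff_exists_injective t).mp hall
  have hfB : ∀ x : A, f x ∈ B ∧ G.Adj x.1 (f x) := by
    intro x
    have := hf x
    rw [ht] at this
    obtain ⟨h1, h2⟩ := Finset.mem_inter.mp this
    exact ⟨(Set.Finite.mem_toFinset _).mp h2, (G.mem_neighborFinset _ _).mp h1⟩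
  refine ⟨fun v => if h : v ∈ A then f ⟨v, h⟩ else v, ?_, ?_, ?_⟩
  · intro x hx y hy hxy
    simp only [dif_pos hx, dif_pos hy] at hxy
    exact congrArg Subtype.val (hfinj hxy)
  · intro x hx
    simp only [dif_pos hx]
    exact hfB ⟨x, hx⟩
  · intro x hx y hy hne
    simp only [dif_pos hx]
    intro heq
    have hB' : f ⟨x, hx⟩ ∈ B := (hfB ⟨x, hx⟩).1
    rw [heq] at hB'
    exact hB'.2 ⟨S₀, hS₀, hy.1 S₀ hS₀⟩
end

section
/- For every nonempty collection Γ' of independent sets of G, there exists a matching from (⋂Γ') − core(G) into corona(G) − (⋃Γ'). -/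
open Set

variable {V : Type*}

section Aux
variable [Fintype V] (G : SimpleGraph V)

/-- neighbors of a set -/
def NBD (T : Set V) : Set V := {v | ∃ t ∈ T, G.Adj t v}

lemma bdd_aux : BddAbove {n | ∃ S : Set V, IndepSet G S ∧ S.ncard = n} := by
  refine ⟨Fintype.card V, ?_⟩
  rintro n ⟨S, -, rfl⟩
  have := Set.ncard_le_ncard (Set.subset_univ S) (Set.toFinite _)
  rwa [Set.ncard_univ, Nat.card_eq_fintype_card] at this

lemma indep_ncard_le_alpha {S : Set V} (h : IndepSet G S) : S.ncard ≤ alpha G :=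
  le_csSup (bdd_aux G) ⟨S, h, rfl⟩

lemma exists_maxIndep : ∃ S : Set V, MaxIndep G S := by
  have h1 : ({n | ∃ S : Set V, IndepSet G S ∧ S.ncard = n}).Nonempty :=
    ⟨0, ∅, by intro x hx; simp at hx, by simp⟩
  obtain ⟨S, hS, hcard⟩ := Nat.sSup_mem h1 (bdd_aux G)
  exact ⟨S, hS, hcard⟩

/-- exchange lemma -/
lemma exchange {T S : Set V} (hT : IndepSet G T) (hS : MaxIndep G S) :
    (T \ S).ncard ≤ (NBD G T ∩ S).ncard := by
  set N := NBD G T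
  have hTN : T ∩ N = ∅ := by
    ext x; simp only [Set.mem_inter_iff, Set.mem_empty_iff_false, iff_false]
    rintro ⟨hxT, t, htT, hadj⟩
    exact hT t htT x hxT hadj
  have hindep : IndepSet G ((S \ N) ∪ T) := by
    rintro x hx y hy hadj
    rcases hx with hx | hx <;> rcases hy with hy | hy
    · exact hS.1 x hx.1 y hy.1 hadj
    · exact hx.2 ⟨y, hy, hadj.symm⟩
    · exact hy.2 ⟨x, hx, hadj⟩
    · exact hT x hx y hy hadj
  have hle : ((S \ N) ∪ T).ncard ≤ S.ncard := by
    rw [hS.2]; exact indep_ncard_le_alpha G hindep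
  have hTS : T ∩ S ⊆ S \ N := by
    intro x hx
    refine ⟨hx.2, fun hxN => ?_⟩
    have : x ∈ T ∩ N := ⟨hx.1, hxN⟩
    simp [hTN] at this
  have hunion : (S \ N) ∪ T = (S \ N) ∪ (T \ S) := by
    ext x; constructor
    · rintro (hx | hx)
      · exact Or.inl hx
      · by_cases hxS : x ∈ S
        · exact Or.inl (hTS ⟨hx, hxS⟩)
        · exact Or.inr ⟨hx, hxS⟩
    · rintro (hx | hx)
      · exact Or.inl hx
      · exact Or.inr hx.1
  have hdisj : Disjoint (S \ N) (T \ S) := by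
    rw [Set.disjoint_left]
    rintro x ⟨hxS, -⟩ ⟨-, hxS'⟩
    exact hxS' hxS
  rw [hunion, Set.ncard_union_eq hdisj (Set.toFinite _) (Set.toFinite _)] at hle
  have h1 : (S ∩ N).ncard + (S \ N).ncard = S.ncard :=
    Set.ncard_inter_add_ncard_diff_eq_ncard S N (Set.toFinite _)
  have h2 : N ∩ S = S ∩ N := Set.inter_comm _ _
  rw [h2]
  omega

/-- Key claim, by strong induction on `T.ncard`. -/
lemma key_claim : ∀ n (T : Set V), T.ncard = n → IndepSet G T →
    (∀ t ∈ T, ∃ S, MaxIndep G S ∧ t ∉ S) →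
    T.ncard ≤ (NBD G T ∩ corona G).ncard := by
  intro n
  induction n using Nat.strong_induction_on with
  | _ n ih =>
    intro T hTn hT havoid
    rcases Set.eq_empty_or_nonempty T with rfl | ⟨t₀, ht₀⟩
    · simp
    obtain ⟨S, hS, ht₀S⟩ := havoid t₀ ht₀
    set T' := T ∩ S with hT'
    have hT'sub : T' ⊆ T := Set.inter_subset_left
    have hT'indep : IndepSet G T' := fun x hx y hy => hT x (hT'sub hx) y (hT'sub hy)
    have hT'lt : T'.ncard < T.ncard := by
      have hss : T' ⊂ T := ⟨hT'sub, fun hsub => ht₀S (hsub ht₀).2⟩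
      exact Set.ncard_lt_ncard hss (Set.toFinite _)
    have ihT' : T'.ncard ≤ (NBD G T' ∩ corona G).ncard := by
      apply ih T'.ncard (hTn ▸ hT'lt) T' rfl hT'indep
      exact fun t ht => havoid t (hT'sub ht)
    have hexch : (T \ S).ncard ≤ (NBD G T ∩ S).ncard := exchange G hT hS
    -- the two target sets are disjoint
    have hdisj : Disjoint (NBD G T ∩ S) (NBD G T' ∩ corona G) := by
      rw [Set.disjoint_left]
      rintro v ⟨hvN, hvS⟩ ⟨⟨t', ht', hadj⟩, -⟩
      exact hS.1 t' ht'.2 v hvS hadj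
    have hsub1 : NBD G T ∩ S ⊆ NBD G T ∩ corona G := by
      rintro v ⟨hvN, hvS⟩
      exact ⟨hvN, Set.subset_sUnion_of_mem (hS : S ∈ Omega G) hvS⟩
    have hsub2 : NBD G T' ∩ corona G ⊆ NBD G T ∩ corona G := by
      rintro v ⟨⟨t', ht', hadj⟩, hvc⟩
      exact ⟨⟨t', hT'sub ht', hadj⟩, hvc⟩
    have hcard : (NBD G T ∩ S).ncard + (NBD G T' ∩ corona G).ncard
        ≤ (NBD G T ∩ corona G).ncard := by
      rw [← Set.ncard_union_eq hdisj (Set.toFinite _) (Set.toFinite _)]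
      exact Set.ncard_le_ncard (Set.union_subset hsub1 hsub2) (Set.toFinite _)
    have hsplit : T'.ncard + (T \ S).ncard = T.ncard :=
      Set.ncard_inter_add_ncard_diff_eq_ncard T S (Set.toFinite _)
    omega

end Aux

theorem stmt_2 [Fintype V] (G : SimpleGraph V)
    (Γ' : Set (Set V)) (hΓ' : ∀ S ∈ Γ', IndepSet G S) (hne : Γ'.Nonempty) :
    MatchingFrom G (⋂₀ Γ' \ core G) (corona G \ ⋃₀ Γ') := by
  classical
  obtain ⟨B₀, hB₀⟩ := hne
  set A : Set V := ⋂₀ Γ'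
  set W : Set V := ⋃₀ Γ'
  set X : Set V := A \ core G with hX
  set Y : Set V := corona G \ W with hY
  have hAindep : IndepSet G A := fun x hx y hy =>
    hΓ' B₀ hB₀ x (hx B₀ hB₀) y (hy B₀ hB₀)
  have hAW : A ⊆ W := fun x hx => ⟨B₀, hB₀, hx B₀ hB₀⟩
  -- neighbors of A are not in W
  have hNW : ∀ x ∈ A, ∀ v, G.Adj x v → v ∉ W := by
    rintro x hx v hadj ⟨B, hB, hvB⟩
    exact hΓ' B hB x (hx B hB) v hvB hadj
  -- Hall setup
  haveI : Fintype ↥X := (Set.toFinite X).fintype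
  let t : ↥X → Finset V := fun x =>
    (Set.toFinite {v | G.Adj ↑x v ∧ v ∈ Y}).toFinset
  have hhall : ∀ s : Finset ↥X, s.card ≤ (s.biUnion t).card := by
    intro s
    set T : Set V := Subtype.val '' (↑s : Set ↥X) with hT
    have hTX : T ⊆ X := by rintro v ⟨x, -, rfl⟩; exact x.2
    have hTA : T ⊆ A := fun v hv => (hTX hv).1
    have hTindep : IndepSet G T := fun x hx y hy => hAindep x (hTA hx) y (hTA hy)
    have havoid : ∀ u ∈ T, ∃ S, MaxIndep G S ∧ u ∉ S := by
      intro u hu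
      have : u ∉ core G := (hTX hu).2
      simp only [core, Set.mem_sInter, not_forall] at this
      obtain ⟨S, hS, huS⟩ := this
      exact ⟨S, hS, huS⟩
    have hkey : T.ncard ≤ (NBD G T ∩ corona G).ncard :=
      key_claim G T.ncard T rfl hTindep havoid
    have hTcard : T.ncard = s.card := by
      rw [hT, Set.ncard_image_of_injective _ Subtype.val_injective, Set.ncard_coe_finset]
    have hset : NBD G T ∩ corona G = ↑(s.biUnion t) := by
      ext v
      simp only [Finset.coe_biUnion, Set.mem_iUnion, Finset.mem_coe, t,
        Set.Finite.mem_toFinset, Set.mem_setOf_eq, Set.mem_inter_iff]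
      constructor
      · rintro ⟨⟨u, hu, hadj⟩, hvc⟩
        obtain ⟨x, hxs, rfl⟩ := hu
        exact ⟨x, hxs, hadj, hvc, fun hvW => hNW _ (hTA ⟨x, hxs, rfl⟩) v hadj hvW⟩
      · rintro ⟨x, hxs, hadj, hvY⟩
        exact ⟨⟨↑x, ⟨x, hxs, rfl⟩, hadj⟩, hvY.1⟩
    rw [← hTcard]
    calc T.ncard ≤ (NBD G T ∩ corona G).ncard := hkey
      _ = (↑(s.biUnion t) : Set V).ncard := by rw [hset]
      _ = (s.biUnion t).card := Set.ncard_coe_finset _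
  obtain ⟨f, hfinj, hft⟩ := (Finset.all_card_le_biUnion_card_iff_exists_injective t).mp hhall
  refine ⟨fun v => if h : v ∈ X then f ⟨v, h⟩ else v, ?_, ?_, ?_⟩
  · intro x hx y hy hxy
    simp only [dif_pos hx, dif_pos hy] at hxy
    exact congrArg Subtype.val (hfinj hxy)
  · intro x hx
    have h := hft ⟨x, hx⟩
    simp only [t, Set.Finite.mem_toFinset, Set.mem_setOf_eq] at h
    dsimp only
    rw [dif_pos hx]
    exact ⟨h.2, h.1⟩
  · intro x hx y hy _
    have h := hft ⟨x, hx⟩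
    simp only [t, Set.Finite.mem_toFinset, Set.mem_setOf_eq] at h
    dsimp only
    rw [dif_pos hx]
    intro heq
    exact h.2.2 (heq ▸ hAW hy.1)
end

section
/- If Γ ⊆ Ω(G) and Γ' is a collection of independent sets of G such that ⋃Γ' ⊆ ⋃Γ and ⋂Γ ⊆ ⋂Γ', then |⋃Γ'| + |⋂Γ'| ≤ |⋃Γ| + |⋂Γ|. -/
open Set

variable {V : Type*}

/-- The neighborhood of a set of vertices. -/
def Nbr (G : SimpleGraph V) (X : Set V) : Set V := {y | ∃ x ∈ X, G.Adj x y}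

lemma indep_le_alpha [Fintype V] (G : SimpleGraph V) {S : Set V} (h : IndepSet G S) :
    S.ncard ≤ alpha G := by
  apply le_csSup
  · refine ⟨Fintype.card V, ?_⟩
    rintro n ⟨T, -, rfl⟩
    simpa [Set.ncard_univ] using Set.ncard_le_ncard (Set.subset_univ T) Set.finite_univ
  · exact ⟨S, h, rfl⟩

lemma exchange_s3 [Fintype V] (G : SimpleGraph V) {W X : Set V}
    (hW : MaxIndep G W) (hX : IndepSet G X) :
    (X \ W).ncard ≤ (Nbr G (X \ W) ∩ W).ncard := by
  set Z := X \ W with hZ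
  set N := Nbr G Z ∩ W with hN
  have hindep : IndepSet G ((W \ Nbr G Z) ∪ Z) := by
    rintro a ha b hb hab
    rcases ha with ha | ha <;> rcases hb with hb | hb
    · exact hW.1 a ha.1 b hb.1 hab
    · exact ha.2 ⟨b, hb, hab.symm⟩
    · exact hb.2 ⟨a, ha, hab⟩
    · exact hX a ha.1 b hb.1 hab
  have hle := indep_le_alpha G hindep
  have hdisj : Disjoint (W \ Nbr G Z) Z := by
    rw [Set.disjoint_left]
    rintro a ⟨haW, -⟩ haZ
    exact haZ.2 haW
  have hcard : ((W \ Nbr G Z) ∪ Z).ncard = (W \ Nbr G Z).ncard + Z.ncard :=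
    Set.ncard_union_eq hdisj (Set.toFinite _) (Set.toFinite _)
  have heq : W \ Nbr G Z = W \ N := by
    ext a
    simp only [hN, Set.mem_diff, Set.mem_inter_iff]
    tauto
  have h2 : (W \ Nbr G Z).ncard = W.ncard - N.ncard := by
    rw [heq, Set.ncard_diff Set.inter_subset_right]
  have hNW : N.ncard ≤ W.ncard := Set.ncard_le_ncard Set.inter_subset_right (Set.toFinite _)
  rw [← hW.2] at hle
  omega

lemma keyL [Fintype V] (G : SimpleGraph V) {Γ : Set (Set V)} (hΓ : Γ ⊆ Omega G) :
    ∀ (n : ℕ) (X : Set V), X.ncard = n → IndepSet G X → (∀ x ∈ X, ∃ W ∈ Γ, x ∉ W) →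
      X.ncard ≤ (Nbr G X ∩ ⋃₀ Γ).ncard := by
  intro n
  induction n using Nat.strong_induction_on with
  | _ n IH =>
    intro X hn hX hmiss
    rcases Set.eq_empty_or_nonempty X with rfl | ⟨x0, hx0⟩
    · simp
    obtain ⟨W, hWΓ, hx0W⟩ := hmiss x0 hx0
    have hWmax : MaxIndep G W := hΓ hWΓ
    have hssub : X ∩ W ⊂ X := ⟨Set.inter_subset_left, fun hsub => hx0W (hsub hx0).2⟩
    have hlt : (X ∩ W).ncard < n := by
      rw [← hn]; exact Set.ncard_lt_ncard hssub (Set.toFinite X)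
    have hIH := IH _ hlt (X ∩ W) rfl (fun a ha b hb => hX a ha.1 b hb.1)
      (fun a ha => hmiss a ha.1)
    have hZ := exchange_s3 G hWmax hX
    have hWB : W ⊆ ⋃₀ Γ := fun a ha => ⟨W, hWΓ, ha⟩
    have hsub : (Nbr G (X ∩ W) ∩ ⋃₀ Γ) ∪ (Nbr G (X \ W) ∩ W) ⊆ Nbr G X ∩ ⋃₀ Γ := by
      rintro y (⟨⟨x, hx, hadj⟩, hyB⟩ | ⟨⟨x, hx, hadj⟩, hyW⟩)
      · exact ⟨⟨x, hx.1, hadj⟩, hyB⟩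
      · exact ⟨⟨x, hx.1, hadj⟩, hWB hyW⟩
    have hdisj : Disjoint (Nbr G (X ∩ W) ∩ ⋃₀ Γ) (Nbr G (X \ W) ∩ W) := by
      rw [Set.disjoint_left]
      rintro y ⟨⟨x, hx, hadj⟩, -⟩ ⟨-, hyW⟩
      exact hWmax.1 x hx.2 y hyW hadj
    have hsplitdisj : Disjoint (X ∩ W) (X \ W) := by
      rw [Set.disjoint_left]
      rintro a ⟨-, haW⟩ ⟨-, haW'⟩
      exact haW' haW
    have hXsplit : X.ncard = (X ∩ W).ncard + (X \ W).ncard := by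
      rw [← Set.ncard_union_eq hsplitdisj (Set.toFinite _) (Set.toFinite _),
        Set.inter_union_diff]
    have hunion : ((Nbr G (X ∩ W) ∩ ⋃₀ Γ) ∪ (Nbr G (X \ W) ∩ W)).ncard =
        (Nbr G (X ∩ W) ∩ ⋃₀ Γ).ncard + (Nbr G (X \ W) ∩ W).ncard :=
      Set.ncard_union_eq hdisj (Set.toFinite _) (Set.toFinite _)
    have hfinal := Set.ncard_le_ncard hsub (Set.toFinite _)
    omega

theorem stmt_3 [Fintype V] (G : SimpleGraph V)
    (Γ Γ' : Set (Set V)) (hΓ : Γ ⊆ Omega G) (hΓne : Γ.Nonempty)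
    (hΓ' : ∀ S ∈ Γ', IndepSet G S) (hΓ'ne : Γ'.Nonempty)
    (hU : ⋃₀ Γ' ⊆ ⋃₀ Γ) (hI : ⋂₀ Γ ⊆ ⋂₀ Γ') :
    (⋃₀ Γ').ncard + (⋂₀ Γ').ncard ≤ (⋃₀ Γ).ncard + (⋂₀ Γ).ncard := by
  obtain ⟨S0, hS0⟩ := hΓ'ne
  have hA'indep : IndepSet G (⋂₀ Γ') := fun x hx y hy =>
    hΓ' S0 hS0 x (hx S0 hS0) y (hy S0 hS0)
  have hXindep : IndepSet G (⋂₀ Γ' \ ⋂₀ Γ) := fun x hx y hy => hA'indep x hx.1 y hy.1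
  have hmiss : ∀ x ∈ ⋂₀ Γ' \ ⋂₀ Γ, ∃ W ∈ Γ, x ∉ W := by
    rintro x ⟨-, hx⟩
    by_contra h
    push_neg at h
    exact hx fun W hW => h W hW
  have hkey := keyL G hΓ _ (⋂₀ Γ' \ ⋂₀ Γ) rfl hXindep hmiss
  have htarget : Nbr G (⋂₀ Γ' \ ⋂₀ Γ) ∩ ⋃₀ Γ ⊆ ⋃₀ Γ \ ⋃₀ Γ' := by
    rintro y ⟨⟨x, hx, hadj⟩, hyB⟩
    refine ⟨hyB, ?_⟩
    rintro ⟨S', hS', hyS'⟩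
    exact hΓ' S' hS' x (hx.1 S' hS') y hyS' hadj
  have h1 : (⋂₀ Γ' \ ⋂₀ Γ).ncard ≤ (⋃₀ Γ \ ⋃₀ Γ').ncard :=
    hkey.trans (Set.ncard_le_ncard htarget (Set.toFinite _))
  have h2 : (⋂₀ Γ' \ ⋂₀ Γ).ncard + (⋂₀ Γ).ncard = (⋂₀ Γ').ncard :=
    Set.ncard_diff_add_ncard_of_subset hI (Set.toFinite _)
  have h3 : (⋃₀ Γ \ ⋃₀ Γ').ncard + (⋃₀ Γ').ncard = (⋃₀ Γ).ncard :=
    Set.ncard_diff_add_ncard_of_subset hU (Set.toFinite _)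
  omega
end

section
/- If Γ' ⊆ Γ ⊆ Ω(G) are nonempty collections of maximum independent sets of G, then |⋃Γ'| + |⋂Γ'| ≤ |⋃Γ| + |⋂Γ|. -/
open Set

variable {V : Type*}

/-!
Adding a maximum independent set `S` to a nonempty family `Δ` of independent sets
enlarges the union by `|S \ ⋃Δ|` and shrinks the intersection by `|⋂Δ \ S|`, so it suffices
that `|⋂Δ \ S| ≤ |S \ ⋃Δ|`. The set `X = ⋂Δ \ S` is independent, and its neighbours in `S` lie
outside every member of `Δ`. If `X` had more elements than its neighbourhood in `S`, trading
that neighbourhood for `X` would give an independent set larger than `S`. Going from `Γ'` to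
`Γ` one set at a time then proves the theorem.
-/

section

variable {G : SimpleGraph V}

lemma IndepSet.mono {S T : Set V} (hS : IndepSet G S) (hTS : T ⊆ S) : IndepSet G T :=
  fun x hx y hy => hS x (hTS hx) y (hTS hy)

lemma IndepSet.ncard_le_alpha [Finite V] {S : Set V} (hS : IndepSet G S) :
    S.ncard ≤ alpha G :=
  le_csSup ⟨Nat.card V, by rintro n ⟨T, -, rfl⟩; exact ncard_le_card T⟩ ⟨S, hS, rfl⟩

lemma MaxIndep.ncard_le_ncard_inter_neighbors [Finite V] {S X : Set V} (hS : MaxIndep G S)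
    (hX : IndepSet G X) (hXS : Disjoint X S) :
    X.ncard ≤ (S ∩ ⋃ x ∈ X, G.neighborSet x).ncard := by
  set N := ⋃ x ∈ X, G.neighborSet x
  by_contra! hlt
  have hindep : IndepSet G ((S \ N) ∪ X) := by
    have hN : ∀ a ∈ X, ∀ b ∈ S \ N, ¬ G.Adj a b := fun a ha b hb hab =>
      hb.2 (mem_biUnion ha hab)
    rintro a (ha | ha) b (hb | hb) hab
    · exact hS.1 a ha.1 b hb.1 hab
    · exact hN b hb a ha hab.symm
    · exact hN a ha b hb hab
    · exact hX a ha b hb hab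
  have hcard : ((S \ N) ∪ X).ncard = (S \ N).ncard + X.ncard :=
    ncard_union_eq (hXS.symm.mono_left sdiff_subset)
  have : (S \ N).ncard + X.ncard ≤ (S ∩ N).ncard + (S \ N).ncard := by
    rw [← hcard, ncard_inter_add_ncard_sdiff_eq_ncard, hS.2]
    exact hindep.ncard_le_alpha
  omega

lemma ncard_sInter_diff_le_ncard_diff_sUnion [Finite V] {Δ : Set (Set V)}
    (hΔ : ∀ A ∈ Δ, IndepSet G A) (hne : Δ.Nonempty) {S : Set V} (hS : MaxIndep G S) :
    (⋂₀ Δ \ S).ncard ≤ (S \ ⋃₀ Δ).ncard := by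
  obtain ⟨A, hA⟩ := hne
  have hX : IndepSet G (⋂₀ Δ \ S) :=
    (hΔ A hA).mono (sdiff_subset.trans (sInter_subset_of_mem hA))
  have hN : S ∩ ⋃ x ∈ ⋂₀ Δ \ S, G.neighborSet x ⊆ S \ ⋃₀ Δ := by
    rintro y ⟨hyS, hy⟩
    obtain ⟨x, hx, hxy⟩ := mem_iUnion₂.1 hy
    exact ⟨hyS, fun ⟨B, hB, hyB⟩ => hΔ B hB x (hx.1 B hB) y hyB hxy⟩
  exact (MaxIndep.ncard_le_ncard_inter_neighbors hS hX disjoint_sdiff_left).trans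
    (ncard_le_ncard hN)

lemma ncard_sUnion_add_ncard_sInter_le_insert [Finite V] {Δ : Set (Set V)}
    (hΔ : ∀ A ∈ Δ, IndepSet G A) (hne : Δ.Nonempty) {S : Set V} (hS : MaxIndep G S) :
    (⋃₀ Δ).ncard + (⋂₀ Δ).ncard ≤ (⋃₀ insert S Δ).ncard + (⋂₀ insert S Δ).ncard := by
  rw [sUnion_insert, sInter_insert, inter_comm, ← ncard_sdiff_add_ncard,
    ← ncard_inter_add_ncard_sdiff_eq_ncard (⋂₀ Δ) S]
  have := ncard_sInter_diff_le_ncard_diff_sUnion hΔ hne hS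
  omega

end

theorem stmt_4_general [Fintype V] (G : SimpleGraph V)
    (Γ Γ' : Set (Set V)) (h1 : Γ' ⊆ Γ) (h2 : Γ ⊆ Omega G)
    (hΓ'ne : Γ'.Nonempty) :
    (⋃₀ Γ').ncard + (⋂₀ Γ').ncard ≤ (⋃₀ Γ).ncard + (⋂₀ Γ).ncard := by
  refine ((Set.toFinite Γ).induction_to
    (C := fun Δ => Δ.Nonempty ∧ (⋃₀ Γ').ncard + (⋂₀ Γ').ncard ≤ (⋃₀ Δ).ncard + (⋂₀ Δ).ncard)
    Γ' h1 ⟨hΓ'ne, le_rfl⟩ ?_).2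
  rintro Δ hΔΓ ⟨hne, hle⟩
  obtain ⟨S, hSΓ, hSΔ⟩ := exists_of_ssubset hΔΓ
  exact ⟨S, ⟨hSΓ, hSΔ⟩, insert_nonempty S Δ,
    hle.trans (ncard_sUnion_add_ncard_sInter_le_insert (fun A hA => (h2 (hΔΓ.subset hA)).1) hne
      (h2 hSΓ))⟩

theorem stmt_4 [Fintype V] (G : SimpleGraph V)
    (Γ Γ' : Set (Set V)) (h1 : Γ' ⊆ Γ) (h2 : Γ ⊆ Omega G)
    (hΓ'ne : Γ'.Nonempty) (hΓne : Γ.Nonempty) :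
    (⋃₀ Γ').ncard + (⋂₀ Γ').ncard ≤ (⋃₀ Γ).ncard + (⋂₀ Γ).ncard :=
  stmt_4_general G Γ Γ' h1 h2 hΓ'ne
end

section
/- If core(G) is a critical independent set, diadem(G) = corona(G), then core(G) = nucleus(G). -/
open Set

variable {V : Type*}

/-- The neighborhood `N(X)` of a set of vertices. -/
def nbhd (G : SimpleGraph V) (X : Set V) : Set V := {v | ∃ x ∈ X, G.Adj x v}

/-- The difference `d(X) = |X| - |N(X)|`. -/
noncomputable def diffd (G : SimpleGraph V) (X : Set V) : ℤ :=
  (X.ncard : ℤ) - ((nbhd G X).ncard : ℤ)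

/-- A critical independent set. -/
def CritIndep (G : SimpleGraph V) (A : Set V) : Prop :=
  IndepSet G A ∧ ∀ I : Set V, IndepSet G I → diffd G I ≤ diffd G A

/-- A maximum(-cardinality) critical independent set. -/
def MaxCritIndep (G : SimpleGraph V) (A : Set V) : Prop :=
  CritIndep G A ∧ ∀ B : Set V, CritIndep G B → B.ncard ≤ A.ncard

/-- `nucleus(G)`, the intersection of all maximum critical independent sets. -/
def nucleus (G : SimpleGraph V) : Set V := ⋂₀ {A | MaxCritIndep G A}

/-- `diadem(G)`, the union of all maximum critical independent sets. -/
def diadem (G : SimpleGraph V) : Set V := ⋃₀ {A | MaxCritIndep G A}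

/-- Every independent set has cardinality at most `α(G)`. -/
lemma indep_ncard_le_alpha_s8 [Fintype V] (G : SimpleGraph V) {T : Set V}
    (hT : IndepSet G T) : T.ncard ≤ alpha G := by
  apply le_csSup
  · refine ⟨Fintype.card V, ?_⟩
    rintro n ⟨S, -, rfl⟩
    calc S.ncard ≤ (Set.univ : Set V).ncard :=
          Set.ncard_le_ncard (Set.subset_univ S) (Set.toFinite _)
    _ = Fintype.card V := by rw [Set.ncard_univ, Nat.card_eq_fintype_card]
  · exact ⟨T, hT, rfl⟩

lemma nbhd_union (G : SimpleGraph V) (A B : Set V) :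
    nbhd G (A ∪ B) = nbhd G A ∪ nbhd G B := by
  ext v
  simp only [nbhd, Set.mem_union, Set.mem_setOf_eq]
  constructor
  · rintro ⟨x, hx | hx, hadj⟩
    · exact Or.inl ⟨x, hx, hadj⟩
    · exact Or.inr ⟨x, hx, hadj⟩
  · rintro (⟨x, hx, hadj⟩ | ⟨x, hx, hadj⟩)
    · exact ⟨x, Or.inl hx, hadj⟩
    · exact ⟨x, Or.inr hx, hadj⟩

lemma nbhd_inter_subset (G : SimpleGraph V) (A B : Set V) :
    nbhd G (A ∩ B) ⊆ nbhd G A ∩ nbhd G B := by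
  rintro v ⟨x, ⟨hxA, hxB⟩, hadj⟩
  exact ⟨⟨x, hxA, hadj⟩, ⟨x, hxB, hadj⟩⟩

/-- No vertex of the corona is adjacent to a vertex of the core. -/
lemma corona_nonadj_core (G : SimpleGraph V) {x y : V}
    (hx : x ∈ corona G) (hy : y ∈ core G) : ¬ G.Adj x y := by
  obtain ⟨S, hS, hxS⟩ := hx
  exact hS.1 x hxS y (hy S hS)

theorem stmt_8 [Fintype V] (G : SimpleGraph V)
    (hcrit : CritIndep G (core G)) (h : diadem G = corona G) :
    core G = nucleus G := by
  apply Set.Subset.antisymm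
  · -- core ⊆ nucleus
    apply Set.subset_sInter
    intro A hA
    have hAindep : IndepSet G A := hA.1.1
    -- there are no edges between `A` and `core G`
    have hAcor : A ⊆ corona G := by
      rw [← h]; exact fun a ha => ⟨A, hA, ha⟩
    have hUindep : IndepSet G (A ∪ core G) := by
      rintro x (hx | hx) y (hy | hy)
      · exact hAindep x hx y hy
      · exact corona_nonadj_core G (hAcor hx) hy
      · intro hadj; exact corona_nonadj_core G (hAcor hy) hx hadj.symm
      · exact hcrit.1 x hx y hy
    have hIindep : IndepSet G (A ∩ core G) :=
      fun x hx y hy => hAindep x hx.1 y hy.1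
    -- counting facts (submodularity of `diffd`)
    have n1 : (A ∪ core G).ncard + (A ∩ core G).ncard = A.ncard + (core G).ncard :=
      Set.ncard_union_add_ncard_inter A (core G)
    have n3 : (nbhd G A ∪ nbhd G (core G)).ncard + (nbhd G A ∩ nbhd G (core G)).ncard
        = (nbhd G A).ncard + (nbhd G (core G)).ncard :=
      Set.ncard_union_add_ncard_inter _ _
    have n4 : (nbhd G (A ∩ core G)).ncard ≤ (nbhd G A ∩ nbhd G (core G)).ncard :=
      Set.ncard_le_ncard (nbhd_inter_subset G A (core G)) (Set.toFinite _)
    have key : diffd G A + diffd G (core G)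
        ≤ diffd G (A ∪ core G) + diffd G (A ∩ core G) := by
      simp only [diffd, nbhd_union]
      omega
    have hdAc : diffd G (core G) = diffd G A :=
      le_antisymm (hA.1.2 _ hcrit.1) (hcrit.2 _ hAindep)
    have hU : diffd G (A ∪ core G) ≤ diffd G A := hA.1.2 _ hUindep
    have hI : diffd G (A ∩ core G) ≤ diffd G A := hA.1.2 _ hIindep
    have hUcrit : CritIndep G (A ∪ core G) := by
      refine ⟨hUindep, fun I hIind => ?_⟩
      have := hA.1.2 I hIind
      linarith
    have hle : (A ∪ core G).ncard ≤ A.ncard := hA.2 _ hUcrit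
    have heq : A = A ∪ core G :=
      Set.eq_of_subset_of_ncard_le (Set.subset_union_left) hle (Set.toFinite _)
    rw [heq]
    exact Set.subset_union_right
  · -- nucleus ⊆ core
    apply Set.subset_sInter
    intro S hS v hv
    by_contra hvS
    -- `v` is non-adjacent to every vertex of `S`
    have nonadj : ∀ s ∈ S, ¬ G.Adj v s := by
      intro s hsS
      have hscor : s ∈ corona G := ⟨S, hS, hsS⟩
      rw [← h] at hscor
      obtain ⟨A, hA, hsA⟩ := hscor
      exact hA.1.1 v (hv A hA) s hsA
    have hins : IndepSet G (insert v S) := by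
      rintro x (rfl | hx) y (rfl | hy)
      · exact fun hadj => G.irrefl hadj
      · exact nonadj y hy
      · exact fun hadj => nonadj x hx hadj.symm
      · exact hS.1 x hx y hy
    have hcard : (insert v S).ncard = S.ncard + 1 :=
      Set.ncard_insert_of_notMem hvS (Set.toFinite _)
    have := indep_ncard_le_alpha_s8 G hins
    rw [hcard, hS.2] at this
    omega
end

section
/- If G is a König-Egerváry graph and Γ is any nonempty collection of maximum independent sets of G, then |⋃Γ| + |⋂Γ| = 2α(G). -/
open Set

variable {V : Type*}

/-- In a König-Egerváry graph, a maximum matching yields an injection of `Sᶜ` into `S`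
along edges, for any maximum independent set `S`. -/
lemma key_f [Fintype V] (G : SimpleGraph V)
    (hKE : alpha G + matchNum G = Fintype.card V)
    (S : Set V) (hS : MaxIndep G S) :
    ∃ f : V → V, Set.InjOn f Sᶜ ∧ ∀ v ∉ S, f v ∈ S ∧ G.Adj v (f v) := by
  classical
  -- a maximum matching exists
  obtain ⟨M, hM, hMcard⟩ :
      ∃ M : G.Subgraph, M.IsMatching ∧ M.edgeSet.ncard = matchNum G := by
    have hmem : matchNum G ∈ {n | ∃ M : G.Subgraph, M.IsMatching ∧ M.edgeSet.ncard = n} := by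
      apply Nat.sSup_mem
      · exact ⟨0, ⊥, fun v hv => by simp at hv, by simp⟩
      · refine ⟨(Set.univ : Set (Sym2 V)).ncard, ?_⟩
        rintro n ⟨M, -, rfl⟩
        exact Set.ncard_le_ncard (Set.subset_univ _) Set.finite_univ
    exact hmem
  have hSα : S.ncard = alpha G := hS.2
  have hcompl : (Sᶜ : Set V).ncard = matchNum G := by
    have h := Set.ncard_add_ncard_compl S
    rw [Nat.card_eq_fintype_card] at h
    omega
  -- choose an endpoint outside `S` for each matching edge
  have hedge_choice : ∀ e ∈ M.edgeSet, ∃ v, v ∈ e ∧ v ∉ S := by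
    intro e he
    induction e with
    | _ a b =>
      rw [SimpleGraph.Subgraph.mem_edgeSet] at he
      have hG : G.Adj a b := M.adj_sub he
      by_cases ha : a ∈ S
      · exact ⟨b, Sym2.mem_mk_right a b, fun hb => hS.1 a ha b hb hG⟩
      · exact ⟨a, Sym2.mem_mk_left a b, ha⟩
  set φ : Sym2 V → V :=
    fun e => if h : ∃ v, v ∈ e ∧ v ∉ S then h.choose else (Quot.out e).1 with hφdef
  have hφ_spec : ∀ e ∈ M.edgeSet, φ e ∈ e ∧ φ e ∉ S := by
    intro e he
    have h := hedge_choice e he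
    simp only [hφdef, dif_pos h]
    exact h.choose_spec
  -- matching edges are pairwise disjoint
  have hdisj : ∀ e₁ ∈ M.edgeSet, ∀ e₂ ∈ M.edgeSet, ∀ v, v ∈ e₁ → v ∈ e₂ → e₁ = e₂ := by
    intro e₁ h₁ e₂ h₂ v hv₁ hv₂
    obtain ⟨a, rfl⟩ := Sym2.mem_iff_exists.mp hv₁
    obtain ⟨b, rfl⟩ := Sym2.mem_iff_exists.mp hv₂
    rw [SimpleGraph.Subgraph.mem_edgeSet] at h₁ h₂
    have hv : v ∈ M.verts := M.edge_vert h₁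
    obtain ⟨w, -, huniq⟩ := hM hv
    exact Sym2.congr_right.mpr ((huniq a h₁).trans (huniq b h₂).symm)
  have hφinj : Set.InjOn φ M.edgeSet := by
    intro e₁ h₁ e₂ h₂ heq
    exact hdisj e₁ h₁ e₂ h₂ (φ e₁) (hφ_spec e₁ h₁).1 (heq ▸ (hφ_spec e₂ h₂).1)
  have himg : φ '' M.edgeSet = Sᶜ := by
    apply Set.eq_of_subset_of_ncard_le
    · rintro v ⟨e, he, rfl⟩
      exact (hφ_spec e he).2
    · rw [Set.ncard_image_of_injOn hφinj, hMcard, hcompl]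
    · exact Set.toFinite _
  -- every vertex outside S is matched to a vertex of S
  have hpartner : ∀ v ∉ S, ∃ w, w ∈ S ∧ M.Adj v w := by
    intro v hv
    have hv' : v ∈ φ '' M.edgeSet := himg.symm ▸ (hv : v ∈ Sᶜ)
    obtain ⟨e, he, hφe⟩ := hv'
    have hve : v ∈ e := hφe ▸ (hφ_spec e he).1
    obtain ⟨w, rfl⟩ := Sym2.mem_iff_exists.mp hve
    have hadj : M.Adj v w := SimpleGraph.Subgraph.mem_edgeSet.mp he
    refine ⟨w, ?_, hadj⟩
    by_contra hwS
    have hwv : w ≠ v := by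
      rintro rfl
      exact G.irrefl (M.adj_sub hadj)
    have hw' : w ∈ φ '' M.edgeSet := himg.symm ▸ (hwS : w ∈ Sᶜ)
    obtain ⟨e', he', hφe'⟩ := hw'
    have hwe' : w ∈ e' := hφe' ▸ (hφ_spec e' he').1
    have hee : e' = s(v, w) := hdisj e' he' _ he w hwe' (Sym2.mem_mk_right v w)
    rw [hee] at hφe'
    exact hwv (hφe'.symm.trans hφe)
  -- the partner function
  refine ⟨fun v => if h : ∃ w, w ∈ S ∧ M.Adj v w then h.choose else v, ?_, ?_⟩
  · intro v₁ hv₁ v₂ hv₂ heq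
    have h₁ := hpartner v₁ hv₁
    have h₂ := hpartner v₂ hv₂
    simp only [dif_pos h₁, dif_pos h₂] at heq
    have ha₁ : M.Adj v₁ h₁.choose := h₁.choose_spec.2
    have ha₂ : M.Adj v₂ h₂.choose := h₂.choose_spec.2
    rw [heq] at ha₁
    have hw : h₂.choose ∈ M.verts := M.edge_vert ha₂.symm
    obtain ⟨u, -, huniq⟩ := hM hw
    exact (huniq v₁ ha₁.symm).trans (huniq v₂ ha₂.symm).symm
  · intro v hv
    have h := hpartner v hv
    simp only [dif_pos h]
    exact ⟨h.choose_spec.1, M.adj_sub h.choose_spec.2⟩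

theorem stmt_13 [Fintype V] (G : SimpleGraph V)
    (hKE : alpha G + matchNum G = Fintype.card V)
    (Γ : Set (Set V)) (hΓ : Γ ⊆ Omega G) (hne : Γ.Nonempty) :
    (⋃₀ Γ).ncard + (⋂₀ Γ).ncard = 2 * alpha G := by
  classical
  obtain ⟨S, hSΓ⟩ := hne
  have hS : MaxIndep G S := hΓ hSΓ
  obtain ⟨f, hfinj, hfS⟩ := key_f G hKE S hS
  set D := ⋃₀ Γ with hD
  set C := ⋂₀ Γ with hC
  have hCS : C ⊆ S := fun x hx => hx S hSΓ
  have hSD : S ⊆ D := fun x hx => ⟨S, hSΓ, hx⟩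
  -- |D \ S| ≤ |S \ C|
  have h1 : (D \ S).ncard ≤ (S \ C).ncard := by
    have hsub : f '' (D \ S) ⊆ S \ C := by
      rintro _ ⟨v, ⟨⟨T, hT, hvT⟩, hvS⟩, rfl⟩
      obtain ⟨hfv, hadj⟩ := hfS v hvS
      refine ⟨hfv, fun hfC => ?_⟩
      exact (hΓ hT).1 v hvT (f v) (hfC T hT) hadj
    calc (D \ S).ncard = (f '' (D \ S)).ncard :=
          (Set.ncard_image_of_injOn (hfinj.mono fun v hv => hv.2)).symm
      _ ≤ (S \ C).ncard := Set.ncard_le_ncard hsub (Set.toFinite _)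
  -- every x ∈ S \ C is hit from D \ S
  have hsurj : ∀ x ∈ S \ C, ∃ t ∈ D \ S, f t = x := by
    intro x hx
    obtain ⟨T, hT, hxT⟩ : ∃ T ∈ Γ, x ∉ T := by
      by_contra h
      push_neg at h
      exact hx.2 (fun T hT => h T hT)
    have hTm : MaxIndep G T := hΓ hT
    have hcard : (T \ S).ncard = (S \ T).ncard := by
      have e1 : (T \ (T ∩ S)).ncard + (T ∩ S).ncard = T.ncard :=
        Set.ncard_diff_add_ncard_of_subset Set.inter_subset_left (Set.toFinite _)
      have e2 : (S \ (S ∩ T)).ncard + (S ∩ T).ncard = S.ncard :=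
        Set.ncard_diff_add_ncard_of_subset Set.inter_subset_left (Set.toFinite _)
      rw [Set.diff_self_inter] at e1 e2
      rw [Set.inter_comm] at e1
      have hTS : T.ncard = S.ncard := hTm.2.trans hS.2.symm
      omega
    have himage : f '' (T \ S) = S \ T := by
      apply Set.eq_of_subset_of_ncard_le
      · rintro _ ⟨t, ⟨htT, htS⟩, rfl⟩
        obtain ⟨hf1, hadj⟩ := hfS t htS
        exact ⟨hf1, fun hfT => hTm.1 t htT (f t) hfT hadj⟩
      · rw [Set.ncard_image_of_injOn (hfinj.mono fun v hv => hv.2), hcard]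
      · exact Set.toFinite _
    have hxmem : x ∈ f '' (T \ S) := himage.symm ▸ (⟨hx.1, hxT⟩ : x ∈ S \ T)
    obtain ⟨t, ⟨htT, htS⟩, hft⟩ := hxmem
    exact ⟨t, ⟨⟨T, hT, htT⟩, htS⟩, hft⟩
  -- |S \ C| ≤ |D \ S|
  have h2 : (S \ C).ncard ≤ (D \ S).ncard := by
    set g : V → V := fun x => if h : ∃ t ∈ D \ S, f t = x then h.choose else x with hg
    have hgspec : ∀ x ∈ S \ C, g x ∈ D \ S ∧ f (g x) = x := by
      intro x hx
      have h := hsurj x hx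
      simp only [hg, dif_pos h]
      exact ⟨h.choose_spec.1, h.choose_spec.2⟩
    have hginj : Set.InjOn g (S \ C) := by
      intro x hx y hy heq
      have hxe := (hgspec x hx).2
      rw [heq, (hgspec y hy).2] at hxe
      exact hxe.symm
    calc (S \ C).ncard = (g '' (S \ C)).ncard := (Set.ncard_image_of_injOn hginj).symm
      _ ≤ (D \ S).ncard :=
          Set.ncard_le_ncard (by rintro _ ⟨x, hx, rfl⟩; exact (hgspec x hx).1) (Set.toFinite _)
    -- arithmetic
  have e1 : (D \ S).ncard + S.ncard = D.ncard :=
    Set.ncard_diff_add_ncard_of_subset hSD (Set.toFinite _)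
  have e2 : (S \ C).ncard + C.ncard = S.ncard :=
    Set.ncard_diff_add_ncard_of_subset hCS (Set.toFinite _)
  have hSα : S.ncard = alpha G := hS.2
  omega
end

section
/- If Γ ⊆ Ω(G) is nonempty and |⋃Γ| + |⋂Γ| = 2α(G), then the induced subgraph G[⋃Γ − ⋂Γ] has a perfect matching. -/
open Set

variable {V : Type*}

/-! Let `A` be a maximum independent set and `Γ` a nonempty family of maximum independent sets
with union `U` and intersection `I`. For `S ⊆ I \ A`, replacing the neighbours of `S` in `A` by `S`
keeps the set independent, so by maximality of `A` Hall's condition holds and `I \ A` is matched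
injectively into `A`; since `I` lies in every member of `Γ`, the partners avoid `U`. Hence
`|A ∪ U| + |A ∩ I| = |U| + |I| + |A \ U| - |I \ A| ≥ |U| + |I|`, and induction on `Γ` gives
`|⋃ Γ| + |⋂ Γ| ≥ 2 α(G)`. In the equality case the matching `I \ A → A \ U` is a bijection, and
together with a perfect matching of `U \ I` (induction again) it perfectly matches
`(A ∪ U) \ (A ∩ I) = (U \ I) ∪ (I \ A) ∪ (A \ U)`. -/

namespace IndepSet

variable {G : SimpleGraph V}

lemma ncard_le_alpha_s14 [Finite V] {S : Set V} (hS : IndepSet G S) : S.ncard ≤ alpha G :=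
  le_csSup ⟨Nat.card V, by rintro _ ⟨T, -, rfl⟩; exact ncard_le_card T⟩ ⟨S, hS, rfl⟩

lemma mono_s14 {S T : Set V} (hS : IndepSet G S) (hTS : T ⊆ S) : IndepSet G T :=
  fun x hx y hy => hS x (hTS hx) y (hTS hy)

end IndepSet

namespace MaxIndep

variable [Finite V] {G : SimpleGraph V} {A : Set V}

lemma ncard_le_ncard_neighbors (hA : MaxIndep G A) {S : Set V} (hS : IndepSet G S)
    (hSA : Disjoint S A) : S.ncard ≤ {y ∈ A | ∃ x ∈ S, G.Adj x y}.ncard := by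
  set N := {y ∈ A | ∃ x ∈ S, G.Adj x y}
  have hNA : N ⊆ A := fun y hy => hy.1
  have hexchange : IndepSet G ((A \ N) ∪ S) := by
    rintro x (hx | hx) y (hy | hy) hxy
    · exact hA.1 x hx.1 y hy.1 hxy
    · exact hx.2 ⟨hx.1, y, hy, hxy.symm⟩
    · exact hy.2 ⟨hy.1, x, hx, hxy⟩
    · exact hS x hx y hy hxy
  have hcard : ((A \ N) ∪ S).ncard = A.ncard - N.ncard + S.ncard := by
    rw [ncard_union_eq (hSA.symm.mono_left sdiff_subset), ncard_sdiff hNA]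
  have hle := hexchange.ncard_le_alpha_s14
  have hNle := ncard_le_ncard hNA
  rw [hcard, ← hA.2] at hle
  omega

lemma exists_injective_adj (hA : MaxIndep G A) {B : Set V} (hB : IndepSet G B) :
    ∃ f : ↥(B \ A) → ↥A, Function.Injective f ∧ ∀ x, G.Adj x.1 (f x).1 := by
  classical
  have := Fintype.ofFinite V
  refine (Fintype.all_card_le_filter_rel_iff_exists_injective
    fun (x : ↥(B \ A)) (y : ↥A) => G.Adj x y).mp fun S => ?_
  have hS := hA.ncard_le_ncard_neighbors (S := Subtype.val '' (S : Set ↥(B \ A)))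
    (hB.mono_s14 (by rintro _ ⟨x, -, rfl⟩; exact x.2.1))
    (disjoint_left.mpr (by rintro _ ⟨x, -, rfl⟩; exact x.2.2))
  convert hS using 1
  · rw [ncard_image_of_injective _ Subtype.val_injective, ncard_coe_finset]
  · rw [← ncard_coe_finset, ← ncard_image_of_injective _ Subtype.val_injective]
    congr 1
    ext y
    simp [and_comm]

end MaxIndep

section Omega

variable {G : SimpleGraph V} {Γ : Set (Set V)}

lemma indepSet_sInter_of_subset_omega (hne : Γ.Nonempty) (hΓ : Γ ⊆ Omega G) :
    IndepSet G (⋂₀ Γ) :=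
  (hΓ hne.some_mem).1.mono_s14 (sInter_subset_of_mem hne.some_mem)

lemma not_adj_of_mem_sInter_of_mem_sUnion (hΓ : Γ ⊆ Omega G) {x y : V} (hx : x ∈ ⋂₀ Γ)
    (hy : y ∈ ⋃₀ Γ) : ¬ G.Adj x y := by
  obtain ⟨S, hS, hyS⟩ := hy
  exact (hΓ hS).1 x (hx S hS) y hyS

lemma exists_injective_adj_sInter_sdiff [Finite V] {A : Set V} (hA : A ∈ Omega G)
    (hne : Γ.Nonempty) (hΓ : Γ ⊆ Omega G) :
    ∃ f : ↥(⋂₀ Γ \ A) → ↥(A \ ⋃₀ Γ), Function.Injective f ∧ ∀ x, G.Adj x.1 (f x).1 := by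
  obtain ⟨f, hf, hadj⟩ :=
    MaxIndep.exists_injective_adj hA (indepSet_sInter_of_subset_omega hne hΓ)
  refine ⟨fun x => ⟨f x, (f x).2, fun hU => ?_⟩,
    fun x y hxy => hf (Subtype.ext (congrArg (fun z : ↥(A \ ⋃₀ Γ) => z.1) hxy)), hadj⟩
  exact not_adj_of_mem_sInter_of_mem_sUnion hΓ x.2.1 hU (hadj x)

lemma ncard_sInter_sdiff_le [Finite V] {A : Set V} (hA : A ∈ Omega G) (hne : Γ.Nonempty)
    (hΓ : Γ ⊆ Omega G) : (⋂₀ Γ \ A).ncard ≤ (A \ ⋃₀ Γ).ncard := by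
  obtain ⟨f, hf, -⟩ := exists_injective_adj_sInter_sdiff hA hne hΓ
  simpa only [Nat.card_coe_set_eq] using Nat.card_le_card_of_injective f hf

end Omega

lemma ncard_union_add_ncard_inter_add_ncard_sdiff [Finite V] (A U I : Set V) :
    (A ∪ U).ncard + (A ∩ I).ncard + (I \ A).ncard = U.ncard + I.ncard + (A \ U).ncard := by
  rw [← sdiff_union_self, ncard_union_eq disjoint_sdiff_left, inter_comm,
    add_assoc, ncard_inter_add_ncard_sdiff_eq_ncard]
  ring

theorem two_mul_alpha_le_ncard_sUnion_add_ncard_sInter [Finite V] {G : SimpleGraph V}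
    {Γ : Set (Set V)} (hne : Γ.Nonempty) (hΓ : Γ ⊆ Omega G) :
    2 * alpha G ≤ (⋃₀ Γ).ncard + (⋂₀ Γ).ncard := by
  induction Γ, Γ.toFinite using Set.Finite.induction_on with
  | empty => exact absurd hne not_nonempty_empty
  | @insert A Γ _ _ ih =>
    have hA : A ∈ Omega G := hΓ (mem_insert A Γ)
    obtain rfl | hne' := Γ.eq_empty_or_nonempty
    · simp [hA.2, two_mul]
    have hΓ' : Γ ⊆ Omega G := (subset_insert A Γ).trans hΓ
    rw [sUnion_insert, sInter_insert]
    have := ih hne' hΓ'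
    have := ncard_sInter_sdiff_le hA hne' hΓ'
    have := ncard_union_add_ncard_inter_add_ncard_sdiff A (⋃₀ Γ) (⋂₀ Γ)
    omega

namespace SimpleGraph.Subgraph

variable {G : SimpleGraph V}

lemma IsMatching.exists_of_disjoint_of_injective [Finite V] {s t : Set V} (hst : Disjoint s t)
    (hcard : t.ncard ≤ s.ncard) (f : s → t) (hf : Function.Injective f)
    (hadj : ∀ x, G.Adj x.1 (f x).1) : ∃ M : G.Subgraph, M.verts = s ∪ t ∧ M.IsMatching :=
  IsMatching.exists_of_disjoint_sets_of_equiv hst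
    (Equiv.ofBijective f (hf.bijective_of_nat_card_le (by simpa only [Nat.card_coe_set_eq])))
    hadj

lemma IsMatching.exists_isPerfectMatching_induce {M : G.Subgraph} (hM : M.IsMatching) :
    ∃ M' : (G.induce M.verts).Subgraph, M'.IsPerfectMatching := by
  refine ⟨M.comap (Embedding.induce M.verts).toHom, fun v _ => ?_, fun v => v.2⟩
  obtain ⟨w, hvw, huniq⟩ := hM v.2
  exact ⟨⟨w, M.edge_vert hvw.symm⟩, ⟨M.adj_sub hvw, hvw⟩, fun u hu => Subtype.ext (huniq _ hu.2)⟩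

end SimpleGraph.Subgraph

lemma sUnion_insert_sdiff_sInter_insert {A : Set V} {Γ : Set (Set V)} (hne : Γ.Nonempty) :
    ⋃₀ insert A Γ \ ⋂₀ insert A Γ = (⋃₀ Γ \ ⋂₀ Γ) ∪ ((⋂₀ Γ \ A) ∪ (A \ ⋃₀ Γ)) := by
  have hIU : ⋂₀ Γ ⊆ ⋃₀ Γ :=
    (sInter_subset_of_mem hne.some_mem).trans (subset_sUnion_of_mem hne.some_mem)
  ext x
  have := @hIU x
  simp only [sUnion_insert, sInter_insert, mem_sdiff, mem_union, mem_inter_iff]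
  tauto

theorem exists_isMatching_verts_eq_sUnion_sdiff_sInter [Finite V] {G : SimpleGraph V}
    {Γ : Set (Set V)} (hne : Γ.Nonempty) (hΓ : Γ ⊆ Omega G)
    (h : (⋃₀ Γ).ncard + (⋂₀ Γ).ncard = 2 * alpha G) :
    ∃ M : G.Subgraph, M.verts = ⋃₀ Γ \ ⋂₀ Γ ∧ M.IsMatching := by
  induction Γ, Γ.toFinite using Set.Finite.induction_on with
  | empty => exact absurd hne not_nonempty_empty
  | @insert A Γ _ _ ih =>
    have hA : A ∈ Omega G := hΓ (mem_insert A Γ)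
    obtain rfl | hne' := Γ.eq_empty_or_nonempty
    · exact ⟨⊥, by simp, fun _ h => h.elim⟩
    have hΓ' : Γ ⊆ Omega G := (subset_insert A Γ).trans hΓ
    obtain ⟨f, hf, hadj⟩ := exists_injective_adj_sInter_sdiff hA hne' hΓ'
    have hle := two_mul_alpha_le_ncard_sUnion_add_ncard_sInter hne' hΓ'
    have hfle := ncard_sInter_sdiff_le hA hne' hΓ'
    have hsum := ncard_union_add_ncard_inter_add_ncard_sdiff A (⋃₀ Γ) (⋂₀ Γ)
    rw [sUnion_insert, sInter_insert] at h
    -- equality for `insert A Γ` leaves no slack in either inequality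
    obtain ⟨M₁, hM₁verts, hM₁⟩ := ih hne' hΓ' (by omega)
    obtain ⟨M₂, hM₂verts, hM₂⟩ := SimpleGraph.Subgraph.IsMatching.exists_of_disjoint_of_injective
      (disjoint_left.mpr fun x hx hx' => hx.2 hx'.1) (by omega) f hf hadj
    have hdisj : Disjoint (⋃₀ Γ \ ⋂₀ Γ) ((⋂₀ Γ \ A) ∪ (A \ ⋃₀ Γ)) := by
      rw [disjoint_left]
      rintro x hx (hx' | hx')
      exacts [hx.2 hx'.1, hx'.2 hx.1]
    refine ⟨M₁ ⊔ M₂, ?_, hM₁.sup hM₂ ?_⟩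
    · rw [sUnion_insert_sdiff_sInter_insert hne', SimpleGraph.Subgraph.verts_sup, hM₁verts,
        hM₂verts]
    · rwa [hM₁.support_eq_verts, hM₂.support_eq_verts, hM₁verts, hM₂verts]

theorem stmt_14 [Fintype V] (G : SimpleGraph V)
    (Γ : Set (Set V)) (hΓ : Γ ⊆ Omega G) (hne : Γ.Nonempty)
    (h : (⋃₀ Γ).ncard + (⋂₀ Γ).ncard = 2 * alpha G) :
    ∃ M : (G.induce (⋃₀ Γ \ ⋂₀ Γ)).Subgraph, M.IsPerfectMatching := by
  obtain ⟨M, hverts, hM⟩ := exists_isMatching_verts_eq_sUnion_sdiff_sInter hne hΓ h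
  rw [← hverts]
  exact hM.exists_isPerfectMatching_induce
end
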